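/- If the sequent Γ ⊢ A is derivable in the system S, the sequence Γ is proper, and the formula A is constant, then Γ is a constant sequence. -/

import Mathlib

/-- Formulae of the system `S`: built from propositional letters and the constant `I`
(`unit`) with the binary connectives `⊗` (`tens`) and `→` (`imp`). -/
inductive Fml : Type
  | atom : ℕ → Fml
  | unit : Fml
  | tens : Fml → Fml → Fml
  | imp : Fml → Fml → Fml

/-- Derivability in the system `S`.  Sequents are `Γ ⊢ A` with `Γ` a finite list of
formulae.  Axioms: `A ⊢ A` and `⊢ I`; structural rules: weakening, interchange and cut;
operational rules: `⊗⊢`, `⊢⊗`, `→⊢` and `⊢→`. -/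
inductive SDeriv : List Fml → Fml → Prop
  | ax (A : Fml) : SDeriv [A] A
  | axI : SDeriv [] Fml.unit
  | weak {Γ A} : SDeriv Γ A → SDeriv (Fml.unit :: Γ) A
  | exch {Γ Δ : List Fml} {A B C} :
      SDeriv (Γ ++ A :: B :: Δ) C → SDeriv (Γ ++ B :: A :: Δ) C
  | cut {Γ Δ Θ : List Fml} {A B} :
      SDeriv Γ A → SDeriv (Δ ++ A :: Θ) B → SDeriv (Δ ++ Γ ++ Θ) B
  | tensL {Γ Δ : List Fml} {A B C} :
      SDeriv (Γ ++ A :: B :: Δ) C → SDeriv (Γ ++ (A.tens B) :: Δ) C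
  | tensR {Γ Δ : List Fml} {A B} :
      SDeriv Γ A → SDeriv Δ B → SDeriv (Γ ++ Δ) (A.tens B)
  | impL {Γ Δ : List Fml} {A B C} :
      SDeriv Γ A → SDeriv (B :: Δ) C → SDeriv (Γ ++ (A.imp B) :: Δ) C
  | impR {Γ : List Fml} {A B} :
      SDeriv (A :: Γ) B → SDeriv Γ (A.imp B)

/-- A formula is constant when it contains no propositional letters. -/
def Fml.isConst : Fml → Prop
  | .atom _ => False
  | .unit => True
  | .tens A B => A.isConst ∧ B.isConst
  | .imp A B => A.isConst ∧ B.isConst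

/-- A formula is proper when it contains no subformula `B → C` with `C` constant
and `B` not constant. -/
def Fml.proper : Fml → Prop
  | .atom _ => True
  | .unit => True
  | .tens A B => A.proper ∧ B.proper
  | .imp A B => A.proper ∧ B.proper ∧ (B.isConst → A.isConst)

/-!
Derivations of `S` are sound for any residuated ordered commutative monoid, reading `I` as `1`,
`⊗` as multiplication and `→` as the residual. Use the chain `0 < 1 < ⊤` whose multiplication is
absorbing at `0` and otherwise `max`, with every letter read as `⊤`. Constant formulae denote `1`,
and a proper formula denotes `1` or `⊤`, namely `⊤` unless it is constant: the only way to reach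
`0` is an implication `B → C` with `B` at `⊤` and `C` at `1`, which properness forbids. If `Γ ⊢ A`
with `A` constant, the product of the values of `Γ` is at most `1` while each factor is at least
`1`, so no factor is `⊤`.
-/

section Soundness

variable {M : Type*} [CommMonoid M]

def Fml.interp (imp : M → M → M) (v : ℕ → M) : Fml → M
  | .atom n => v n
  | .unit => 1
  | .tens A B => interp imp v A * interp imp v B
  | .imp A B => imp (interp imp v A) (interp imp v B)

theorem SDeriv.prod_interp_le [Preorder M] [IsOrderedMonoid M] {imp : M → M → M}
    (hres : ∀ a b c : M, a * b ≤ c ↔ b ≤ imp a c) (v : ℕ → M) {Γ : List Fml} {A : Fml}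
    (h : SDeriv Γ A) : (Γ.map (Fml.interp imp v)).prod ≤ A.interp imp v := by
  induction h with
  | ax A => simp
  | axI => simp [Fml.interp]
  | weak _ ih => simpa [Fml.interp] using ih
  | exch _ ih =>
    simp only [List.map_append, List.map_cons, List.prod_append, List.prod_cons] at ih ⊢
    rwa [mul_left_comm (Fml.interp imp v _)]
  | @cut Γ Δ Θ A B _ _ ih₁ ih₂ =>
    simp only [List.map_append, List.map_cons, List.prod_append, List.prod_cons] at ih₂ ⊢
    calc _ ≤ (Δ.map (Fml.interp imp v)).prod * A.interp imp v *
          (Θ.map (Fml.interp imp v)).prod := by gcongr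
      _ ≤ B.interp imp v := by rwa [mul_assoc]
  | tensL _ ih =>
    simp only [List.map_append, List.map_cons, List.prod_append, List.prod_cons,
      Fml.interp] at ih ⊢
    rwa [mul_assoc]
  | tensR _ _ ih₁ ih₂ =>
    simpa only [List.map_append, List.prod_append, Fml.interp] using mul_le_mul' ih₁ ih₂
  | @impL Γ Δ A B C _ _ ih₁ ih₂ =>
    simp only [List.map_append, List.map_cons, List.prod_append, List.prod_cons,
      Fml.interp] at ih₂ ⊢
    have modus_ponens : A.interp imp v * imp (A.interp imp v) (B.interp imp v) ≤ B.interp imp v :=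
      (hres _ _ _).2 le_rfl
    calc _ = (Γ.map (Fml.interp imp v)).prod * imp (A.interp imp v) (B.interp imp v) *
          (Δ.map (Fml.interp imp v)).prod := (mul_assoc _ _ _).symm
      _ ≤ A.interp imp v * imp (A.interp imp v) (B.interp imp v) *
          (Δ.map (Fml.interp imp v)).prod := by gcongr
      _ ≤ B.interp imp v * (Δ.map (Fml.interp imp v)).prod := by gcongr
      _ ≤ C.interp imp v := ih₂
  | impR _ ih =>
    simp only [List.map_cons, List.prod_cons, Fml.interp] at ih ⊢
    exact (hres _ _ _).1 ih

theorem Fml.interp_eq_one_of_isConst [PartialOrder M] {imp : M → M → M}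
    (hres : ∀ a b c : M, a * b ≤ c ↔ b ≤ imp a c) (v : ℕ → M) {F : Fml} (hF : F.isConst) :
    F.interp imp v = 1 := by
  induction F with
  | atom => exact hF.elim
  | unit => rfl
  | tens A B ihA ihB => simp [Fml.interp, ihA hF.1, ihB hF.2]
  | imp A B ihA ihB =>
    rw [Fml.interp, ihA hF.1, ihB hF.2]
    exact le_antisymm (by simpa using (hres 1 (imp 1 1) 1).2 le_rfl) ((hres 1 1 1).1 (by simp))

end Soundness

inductive Three
  | zero | one | top
deriving DecidableEq

namespace Three

instance : Fintype Three :=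
  ⟨⟨{zero, one, top}, by decide⟩, fun x => by cases x <;> decide⟩

def toNat : Three → ℕ
  | zero => 0
  | one => 1
  | top => 2

instance : LinearOrder Three :=
  LinearOrder.lift' toNat fun a b h => by cases a <;> cases b <;> first | rfl | cases h

def mul : Three → Three → Three
  | zero, _ => zero
  | _, zero => zero
  | one, b => b
  | a, one => a
  | top, top => top

instance : CommMonoid Three where
  mul := mul
  one := one
  mul_assoc := by decide
  one_mul := by decide
  mul_one := by decide
  mul_comm := by decide

instance : IsOrderedMonoid Three where
  mul_le_mul_left := by decide

def imp : Three → Three → Three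
  | zero, _ => top
  | one, b => b
  | top, top => top
  | top, _ => zero

theorem mul_le_iff_le_imp : ∀ a b c : Three, a * b ≤ c ↔ b ≤ imp a c := by decide

theorem imp_top : ∀ a : Three, imp a top = top := by decide

theorem isConst_or_interp_eq_top {F : Fml} (hF : F.proper) :
    F.isConst ∨ F.interp imp (fun _ => top) = top := by
  have interp_eq_one {G : Fml} (hG : G.isConst) :=
    Fml.interp_eq_one_of_isConst mul_le_iff_le_imp (fun _ => top) hG
  induction F with
  | atom => exact .inr rfl
  | unit => exact .inl trivial
  | tens A B ihA ihB =>
    rcases ihA hF.1 with cA | hA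
    · rcases ihB hF.2 with cB | hB
      · exact .inl ⟨cA, cB⟩
      · right; rw [Fml.interp, interp_eq_one cA, hB]; rfl
    · right
      rcases ihB hF.2 with cB | hB
      · rw [Fml.interp, hA, interp_eq_one cB]; rfl
      · rw [Fml.interp, hA, hB]; rfl
  | imp A B _ ihB =>
    rcases ihB hF.2.1 with cB | hB
    · exact .inl ⟨hF.2.2 cB, cB⟩
    · right; rw [Fml.interp, hB, imp_top]

theorem one_le_interp_of_proper {F : Fml} (hF : F.proper) :
    1 ≤ F.interp imp (fun _ => top) := by
  rcases isConst_or_interp_eq_top hF with hc | ht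
  · rw [Fml.interp_eq_one_of_isConst mul_le_iff_le_imp _ hc]
  · rw [ht]; decide

end Three

/-- If `Γ ⊢ A` is derivable in `S`, `Γ` is proper and `A` is constant, then `Γ` is a
constant sequence. -/
theorem proper_antecedent_constant {Γ : List Fml} {A : Fml} (h : SDeriv Γ A)
    (hΓ : ∀ X ∈ Γ, X.proper) (hA : A.isConst) : ∀ X ∈ Γ, X.isConst := by
  let val := Fml.interp Three.imp fun _ => Three.top
  have hsound : (Γ.map val).prod ≤ 1 := by
    simpa only [Fml.interp_eq_one_of_isConst Three.mul_le_iff_le_imp _ hA] using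
      h.prod_interp_le Three.mul_le_iff_le_imp _
  have one_le_val : ∀ x ∈ Γ.map val, 1 ≤ x :=
    List.forall_mem_map.2 fun X hX => Three.one_le_interp_of_proper (hΓ X hX)
  intro X hX
  refine (Three.isConst_or_interp_eq_top (hΓ X hX)).resolve_right fun htop => ?_
  have hle : val X ≤ 1 := (List.single_le_prod one_le_val _ (List.mem_map_of_mem hX)).trans hsound
  rw [show val X = Three.top from htop] at hle
  exact absurd hle (by decide)
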